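/- Let H₁, H₂, H₃ be complex Hilbert spaces and d₁ : H₁ → H₂, d₂ : H₂ → H₃ densely defined closed operators with the complex property. Then the closed subspace ker d₂ = {x ∈ D(d₂) : d₂x = 0} of H₂ is the orthogonal direct sum of the space of harmonic fields 𝓗 = {x ∈ D(d₂) ∩ D(d₁†) : d₂x = 0 and d₁†x = 0} and the closure of the range of d₁; in particular, if the range of d₁ is closed, then ker d₂ = 𝓗 ⊕ ran d₁ (orthogonal direct sum), so every cohomology class of the complex has a unique harmonic representative. -/

import Mathlib

/-!
Harmonic fields are `ker d₂ ∩ ker d₁†`, and `ker d₁† = (ran d₁)ᗮ` since `d₁` is densely defined.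
As `d₂` is closed, `ker d₂` is a closed subspace; by the complex property it contains `ran d₁`,
hence its closure `V`. Orthogonal projection onto `V` splits `ker d₂` as `V ⊕ (ker d₂ ∩ Vᗮ)`, and
the second summand is the space of harmonic fields. Uniqueness of the harmonic part is
`V ∩ Vᗮ = 0`.
-/

open scoped InnerProductSpace ComplexInnerProductSpace

namespace LinearPMap

section Kernel

variable {R E F : Type*} [Ring R] [AddCommGroup E] [Module R E] [AddCommGroup F] [Module R F]

def ker (f : E →ₗ.[R] F) : Submodule R E :=
  f.graph.comap (LinearMap.inl R E F)

theorem mem_ker_iff {f : E →ₗ.[R] F} {x : E} : x ∈ f.ker ↔ ∃ h : x ∈ f.domain, f ⟨x, h⟩ = 0 := by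
  simp only [ker, Submodule.mem_comap, LinearMap.inl_apply, mem_graph_iff, Subtype.exists]
  constructor
  · rintro ⟨y, hy, rfl, hfy⟩
    exact ⟨hy, hfy⟩
  · rintro ⟨hx, hfx⟩
    exact ⟨x, hx, rfl, hfx⟩

theorem range_le_ker {G : Type*} [AddCommGroup G] [Module R G] {f : E →ₗ.[R] F} {g : F →ₗ.[R] G}
    (hmem : ∀ x : f.domain, f x ∈ g.domain)
    (hcomp : ∀ (x : f.domain) (h : f x ∈ g.domain), g ⟨f x, h⟩ = 0) :
    LinearMap.range f.toFun ≤ g.ker := by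
  rintro _ ⟨x, rfl⟩
  exact mem_ker_iff.2 ⟨hmem x, hcomp x (hmem x)⟩

end Kernel

theorem isClosed_ker {R E F : Type*} [CommRing R] [AddCommGroup E] [Module R E] [AddCommGroup F]
    [Module R F] [TopologicalSpace E] [TopologicalSpace F] {f : E →ₗ.[R] F} (hf : f.IsClosed) :
    _root_.IsClosed (f.ker : Set E) :=
  hf.preimage (continuous_id.prodMk continuous_const)

variable {𝕜 E F : Type*} [RCLike 𝕜] [NormedAddCommGroup E] [InnerProductSpace 𝕜 E]
  [NormedAddCommGroup F] [InnerProductSpace 𝕜 F] [CompleteSpace E]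

theorem ker_adjoint {T : E →ₗ.[𝕜] F} (hT : Dense (T.domain : Set E)) :
    T†.ker = (LinearMap.range T.toFun)ᗮ := by
  ext y
  rw [mem_ker_iff, Submodule.mem_orthogonal']
  simp only [LinearMap.mem_range, forall_exists_index, forall_apply_eq_imp_iff]
  constructor
  · rintro ⟨hy, hTy⟩ x
    calc ⟪y, T x⟫_𝕜 = ⟪T† ⟨y, hy⟩, x⟫_𝕜 := (adjoint_isFormalAdjoint hT ⟨y, hy⟩ x).symm
      _ = 0 := by rw [hTy, inner_zero_left]
  · intro hy
    have hzero : ∀ x : T.domain, ⟪(0 : E), (x : E)⟫_𝕜 = ⟪y, T x⟫_𝕜 := fun x => by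
      rw [inner_zero_left]
      exact (hy x).symm
    have hdom : y ∈ T†.domain := mem_adjoint_domain_of_exists y ⟨0, hzero⟩
    exact ⟨hdom, adjoint_apply_eq hT ⟨y, hdom⟩ hzero⟩

end LinearPMap

namespace Submodule

variable {𝕜 E : Type*} [RCLike 𝕜] [NormedAddCommGroup E] [InnerProductSpace 𝕜 E]
  {V K : Submodule 𝕜 E}

theorem coe_eq_inf_orthogonal_add (hVK : V ≤ K) [V.HasOrthogonalProjection] :
    (K : Set E) = {z | ∃ a ∈ K ⊓ Vᗮ, ∃ b ∈ V, z = a + b} := by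
  ext z
  conv_lhs => rw [← sup_orthogonal_inf_of_hasOrthogonalProjection hVK]
  simp only [SetLike.mem_coe, mem_sup, Set.mem_ofPred_eq, inf_comm Vᗮ K]
  constructor
  · rintro ⟨b, hb, a, ha, rfl⟩
    exact ⟨a, ha, b, hb, add_comm b a⟩
  · rintro ⟨a, ha, b, hb, rfl⟩
    exact ⟨b, hb, a, ha, add_comm b a⟩

theorem eq_of_mem_orthogonal_of_sub_mem {a a' : E} (ha : a ∈ Vᗮ) (ha' : a' ∈ Vᗮ)
    (hsub : a - a' ∈ V) : a = a' :=
  sub_eq_zero.1 <| (mem_bot 𝕜).1 <|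
    V.inf_orthogonal_eq_bot ▸ mem_inf.2 ⟨hsub, Vᗮ.sub_mem ha ha'⟩

theorem existsUnique_mem_inf_orthogonal_sub_mem (hVK : V ≤ K) [V.HasOrthogonalProjection]
    {z : E} (hz : z ∈ K) : ∃! a, a ∈ K ⊓ Vᗮ ∧ z - a ∈ V := by
  rw [← SetLike.mem_coe, coe_eq_inf_orthogonal_add hVK] at hz
  obtain ⟨a, ha, b, hb, rfl⟩ := hz
  refine ⟨a, ⟨ha, by simpa using hb⟩, fun a' ⟨ha', hb'⟩ => ?_⟩
  refine eq_of_mem_orthogonal_of_sub_mem (mem_inf.1 ha').2 (mem_inf.1 ha).2 ?_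
  have : a' - a = b - (a + b - a') := by abel
  exact this ▸ V.sub_mem hb hb'

end Submodule

open LinearPMap Submodule in
theorem hodge_ker_decomposition_general
    {H₁ H₂ H₃ : Type*}
    [NormedAddCommGroup H₁] [InnerProductSpace ℂ H₁] [CompleteSpace H₁]
    [NormedAddCommGroup H₂] [InnerProductSpace ℂ H₂] [CompleteSpace H₂]
    [NormedAddCommGroup H₃] [InnerProductSpace ℂ H₃]
    (d₁ : H₁ →ₗ.[ℂ] H₂) (d₂ : H₂ →ₗ.[ℂ] H₃)
    (hd₁ : Dense (d₁.domain : Set H₁))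
    (hd₂c : d₂.IsClosed)
    -- the complex property: `d₂ ∘ d₁ = 0`
    (hmem : ∀ x : d₁.domain, d₁ x ∈ d₂.domain)
    (hcomp : ∀ (x : d₁.domain) (h : d₁ x ∈ d₂.domain), d₂ ⟨d₁ x, h⟩ = 0)
    -- the space of harmonic fields, the range of `d₁`, and the kernel of `d₂`:
    (Harm R₁ K : Set H₂)
    (hHarm : Harm = {x : H₂ | ∃ (h₂ : x ∈ d₂.domain) (h₁ : x ∈ d₁.adjoint.domain),
      d₂ ⟨x, h₂⟩ = 0 ∧ d₁.adjoint ⟨x, h₁⟩ = 0})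
    (hR₁ : R₁ = Set.range fun x : d₁.domain => d₁ x)
    (hK : K = {x : H₂ | ∃ h : x ∈ d₂.domain, d₂ ⟨x, h⟩ = 0}) :
    (∀ x ∈ Harm, ∀ y ∈ closure R₁, ⟪x, y⟫ = 0) ∧
    (K = {z : H₂ | ∃ a ∈ Harm, ∃ b ∈ closure R₁, z = a + b}) ∧
    (IsClosed R₁ →
      (K = {z : H₂ | ∃ a ∈ Harm, ∃ b ∈ R₁, z = a + b}) ∧
      ∀ z ∈ K, ∃! a : H₂, a ∈ Harm ∧ z - a ∈ R₁) := by
  set V := (LinearMap.range d₁.toFun).topologicalClosure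
  have hV : closure R₁ = V := by
    rw [hR₁, topologicalClosure_coe, LinearMap.coe_range]
    rfl
  have hK : K = d₂.ker := by
    ext x
    rw [hK, Set.mem_ofPred_eq, SetLike.mem_coe, mem_ker_iff]
  have hHarm : Harm = d₂.ker ⊓ Vᗮ := by
    ext x
    rw [hHarm, orthogonal_closure, ← ker_adjoint hd₁]
    simp only [Set.mem_ofPred_eq, SetLike.mem_coe, mem_inf, mem_ker_iff, exists_and_left,
      exists_and_right]
  have hVK : V ≤ d₂.ker :=
    topologicalClosure_minimal _ (range_le_ker hmem hcomp) (isClosed_ker hd₂c)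
  subst hHarm hK
  refine ⟨fun x hx y hy => (mem_orthogonal' V x).1 (mem_inf.1 hx).2 y (hV ▸ hy : y ∈ (V : Set H₂)),
    hV ▸ coe_eq_inf_orthogonal_add hVK, fun hR₁c => ?_⟩
  rw [← hR₁c.closure_eq, hV]
  exact ⟨coe_eq_inf_orthogonal_add hVK, fun z hz => existsUnique_mem_inf_orthogonal_sub_mem hVK hz⟩

/-- For a two-term complex of densely defined closed operators between complex Hilbert
spaces, the kernel of `d₂` is the orthogonal direct sum of the space of harmonic fields
and the closure of the range of `d₁`; in particular, if the range of `d₁` is closed, then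
every element of `ker d₂` has a unique harmonic representative modulo `ran d₁`. -/
theorem hodge_ker_decomposition
    {H₁ H₂ H₃ : Type*}
    [NormedAddCommGroup H₁] [InnerProductSpace ℂ H₁] [CompleteSpace H₁]
    [NormedAddCommGroup H₂] [InnerProductSpace ℂ H₂] [CompleteSpace H₂]
    [NormedAddCommGroup H₃] [InnerProductSpace ℂ H₃] [CompleteSpace H₃]
    (d₁ : H₁ →ₗ.[ℂ] H₂) (d₂ : H₂ →ₗ.[ℂ] H₃)
    (hd₁ : Dense (d₁.domain : Set H₁)) (hd₂ : Dense (d₂.domain : Set H₂))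
    (hd₁c : d₁.IsClosed) (hd₂c : d₂.IsClosed)
    -- the complex property: `d₂ ∘ d₁ = 0`
    (hmem : ∀ x : d₁.domain, d₁ x ∈ d₂.domain)
    (hcomp : ∀ (x : d₁.domain) (h : d₁ x ∈ d₂.domain), d₂ ⟨d₁ x, h⟩ = 0)
    -- the space of harmonic fields, the range of `d₁`, and the kernel of `d₂`:
    (Harm R₁ K : Set H₂)
    (hHarm : Harm = {x : H₂ | ∃ (h₂ : x ∈ d₂.domain) (h₁ : x ∈ d₁.adjoint.domain),
      d₂ ⟨x, h₂⟩ = 0 ∧ d₁.adjoint ⟨x, h₁⟩ = 0})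
    (hR₁ : R₁ = Set.range fun x : d₁.domain => d₁ x)
    (hK : K = {x : H₂ | ∃ h : x ∈ d₂.domain, d₂ ⟨x, h⟩ = 0}) :
    (∀ x ∈ Harm, ∀ y ∈ closure R₁, ⟪x, y⟫ = 0) ∧
    (K = {z : H₂ | ∃ a ∈ Harm, ∃ b ∈ closure R₁, z = a + b}) ∧
    (IsClosed R₁ →
      (K = {z : H₂ | ∃ a ∈ Harm, ∃ b ∈ R₁, z = a + b}) ∧
      ∀ z ∈ K, ∃! a : H₂, a ∈ Harm ∧ z - a ∈ R₁) :=
  hodge_ker_decomposition_general d₁ d₂ hd₁ hd₂c hmem hcomp Harm R₁ K hHarm hR₁ hK
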